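/- arXiv:2412.19377 — 3 statements merged into one kernel-verified Lean document; each statement's English description precedes it below -/
import Mathlib

section
/- For the double well potential drift b(x) = -|x|²x + x on ℝᵈ, for all x, y ∈ ℝᵈ, ⟨x - y, b(x) - b(y)⟩ ≤ (1 - (1/6)(|x|² + |y|²))|x - y|². -/
/-! The cubic part of the drift is strongly monotone with a quadratic modulus: polarising gives
`⟪x - y, ‖x‖²x - ‖y‖²y⟫ = ½(‖x‖² + ‖y‖²)‖x - y‖² + ½(‖x‖² - ‖y‖²)²`.
Dropping the square yields the bound with the constant `1/2` in place of `1/6`. -/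

section InnerProductSpace

variable {E : Type*} [NormedAddCommGroup E] [InnerProductSpace ℝ E]

theorem inner_sub_norm_sq_smul_sub_norm_sq_smul (x y : E) :
    inner ℝ (x - y) (‖x‖ ^ 2 • x - ‖y‖ ^ 2 • y) =
      (‖x‖ ^ 2 + ‖y‖ ^ 2) / 2 * ‖x - y‖ ^ 2 + (‖x‖ ^ 2 - ‖y‖ ^ 2) ^ 2 / 2 := by
  simp only [inner_sub_left, inner_sub_right, inner_smul_right, real_inner_self_eq_norm_sq,
    norm_sub_sq_real, real_inner_comm x y]
  ring

theorem half_mul_norm_sq_le_inner_sub_norm_sq_smul_sub (x y : E) :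
    (‖x‖ ^ 2 + ‖y‖ ^ 2) / 2 * ‖x - y‖ ^ 2 ≤ inner ℝ (x - y) (‖x‖ ^ 2 • x - ‖y‖ ^ 2 • y) := by
  rw [inner_sub_norm_sq_smul_sub_norm_sq_smul]
  have := sq_nonneg (‖x‖ ^ 2 - ‖y‖ ^ 2)
  linarith

theorem inner_sub_doubleWell_le (x y : E) :
    inner ℝ (x - y) ((-(‖x‖ ^ 2) • x + x) - (-(‖y‖ ^ 2) • y + y)) ≤
      (1 - (‖x‖ ^ 2 + ‖y‖ ^ 2) / 2) * ‖x - y‖ ^ 2 := by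
  have hsplit : (-(‖x‖ ^ 2) • x + x) - (-(‖y‖ ^ 2) • y + y) =
      (x - y) - (‖x‖ ^ 2 • x - ‖y‖ ^ 2 • y) := by
    simp only [neg_smul]; abel
  rw [hsplit, inner_sub_right, real_inner_self_eq_norm_sq]
  linarith [half_mul_norm_sq_le_inner_sub_norm_sq_smul_sub x y]

end InnerProductSpace

theorem stmt_2_general (d : ℕ)
    (b : EuclideanSpace ℝ (Fin d) → EuclideanSpace ℝ (Fin d))
    (hb : ∀ x, b x = -(‖x‖^2) • x + x) :
    ∀ x y : EuclideanSpace ℝ (Fin d),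
      (inner ℝ (x - y) (b x - b y) : ℝ) ≤
        (1 - (1/6) * (‖x‖^2 + ‖y‖^2)) * ‖x - y‖^2 := by
  intro x y
  rw [hb, hb]
  refine (inner_sub_doubleWell_le x y).trans (mul_le_mul_of_nonneg_right ?_ (sq_nonneg _))
  nlinarith [sq_nonneg ‖x‖, sq_nonneg ‖y‖]

theorem stmt_2 (d : ℕ) (hd : 1 ≤ d)
    (b : EuclideanSpace ℝ (Fin d) → EuclideanSpace ℝ (Fin d))
    (hb : ∀ x, b x = -(‖x‖^2) • x + x) :
    ∀ x y : EuclideanSpace ℝ (Fin d),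
      (inner ℝ (x - y) (b x - b y) : ℝ) ≤
        (1 - (1/6) * (‖x‖^2 + ‖y‖^2)) * ‖x - y‖^2 :=
  stmt_2_general d b hb
end

section
/- For the double well potential drift b(x) = -|x|²x + x on ℝᵈ, for all x, y ∈ ℝᵈ, ⟨x - y, b(x)|y|² - b(y)|x|²⟩ ≤ ((1/2)|x|² + (5/2)|y|²)|x - y|² - |x|²|y|²|x - y|². -/
/-!
Writing `a = ‖x‖²`, `c = ‖y‖²`, `p = ⟪x, y⟫`, the quartic terms cancel and the right-hand side
exceeds the left-hand side by exactly `(a² + 2ac + 5c² - 8cp) / 2`. By Cauchy–Schwarz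
`p ≤ ‖x‖‖y‖`, and with `s = ‖x‖`, `t = ‖y‖` one has
`s⁴ + 2s²t² + 5t⁴ - 8st³ = (s - t)² ((s + t)² + (2t)²) ≥ 0`.
-/

open scoped InnerProductSpace

variable {E : Type*} [NormedAddCommGroup E] [InnerProductSpace ℝ E]

noncomputable def doubleWellDrift (x : E) : E := -(‖x‖ ^ 2) • x + x

lemma inner_sub_smul_doubleWellDrift_eq (x y : E) :
    ⟪x - y, ‖y‖ ^ 2 • doubleWellDrift x - ‖x‖ ^ 2 • doubleWellDrift y⟫_ℝ =
      ((1/2) * ‖x‖ ^ 2 + (5/2) * ‖y‖ ^ 2) * ‖x - y‖ ^ 2 - ‖x‖ ^ 2 * ‖y‖ ^ 2 * ‖x - y‖ ^ 2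
        - (‖x‖ ^ 4 + 2 * ‖x‖ ^ 2 * ‖y‖ ^ 2 + 5 * ‖y‖ ^ 4 - 8 * ‖y‖ ^ 2 * ⟪x, y⟫_ℝ) / 2 := by
  simp only [doubleWellDrift, inner_sub_right, inner_add_right, real_inner_smul_right,
    inner_sub_left, real_inner_self_eq_norm_sq, real_inner_comm x y]
  rw [norm_sub_sq_real]
  ring

lemma mul_pow_three_le_quartic (s t : ℝ) : 8 * s * t ^ 3 ≤ s ^ 4 + 2 * s ^ 2 * t ^ 2 + 5 * t ^ 4 := by
  have h : s ^ 4 + 2 * s ^ 2 * t ^ 2 + 5 * t ^ 4 - 8 * s * t ^ 3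
      = (s - t) ^ 2 * ((s + t) ^ 2 + (2 * t) ^ 2) := by ring
  rw [← sub_nonneg, h]
  positivity

lemma inner_mul_le_quartic (x y : E) :
    8 * ‖y‖ ^ 2 * ⟪x, y⟫_ℝ ≤ ‖x‖ ^ 4 + 2 * ‖x‖ ^ 2 * ‖y‖ ^ 2 + 5 * ‖y‖ ^ 4 :=
  calc 8 * ‖y‖ ^ 2 * ⟪x, y⟫_ℝ ≤ 8 * ‖y‖ ^ 2 * (‖x‖ * ‖y‖) := by
        gcongr; exact real_inner_le_norm x y
    _ = 8 * ‖x‖ * ‖y‖ ^ 3 := by ring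
    _ ≤ _ := mul_pow_three_le_quartic _ _

theorem stmt_3_general (d : ℕ)
    (b : EuclideanSpace ℝ (Fin d) → EuclideanSpace ℝ (Fin d))
    (hb : ∀ x, b x = -(‖x‖^2) • x + x) :
    ∀ x y : EuclideanSpace ℝ (Fin d),
      (inner ℝ (x - y) (‖y‖^2 • b x - ‖x‖^2 • b y) : ℝ) ≤
        ((1/2) * ‖x‖^2 + (5/2) * ‖y‖^2) * ‖x - y‖^2
          - ‖x‖^2 * ‖y‖^2 * ‖x - y‖^2 := by
  intro x y
  obtain rfl : b = doubleWellDrift := funext hb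
  rw [inner_sub_smul_doubleWellDrift_eq]
  linarith [inner_mul_le_quartic x y]

theorem stmt_3 (d : ℕ) (hd : 1 ≤ d)
    (b : EuclideanSpace ℝ (Fin d) → EuclideanSpace ℝ (Fin d))
    (hb : ∀ x, b x = -(‖x‖^2) • x + x) :
    ∀ x y : EuclideanSpace ℝ (Fin d),
      (inner ℝ (x - y) (‖y‖^2 • b x - ‖x‖^2 • b y) : ℝ) ≤
        ((1/2) * ‖x‖^2 + (5/2) * ‖y‖^2) * ‖x - y‖^2
          - ‖x‖^2 * ‖y‖^2 * ‖x - y‖^2 :=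
  stmt_3_general d b hb
end

section
/- Suppose b : ℝᵈ → ℝᵈ and φ : [0,∞) → [0,∞) satisfy: there are L₃, L₄, L₅ > 0 and R ≥ 0 such that for all x, y ∈ ℝᵈ with x ∉ B_R or y ∉ B_R, ⟨x - y, b(x) - b(y)⟩ ≤ -L₃(1 + φ(|x|) + φ(|y|))|x - y|² and ⟨x - y, b(x)φ(|y|) - b(y)φ(|x|)⟩ ≤ (L₄(1 + φ(|x|) + φ(|y|)) - L₅ φ(|x|)φ(|y|))|x - y|². Let θ ∈ (0,1/2) and δ ∈ (0, δ₀] with δ₀ = (L₃/(2L₄))^(1/θ) ∧ 1, and define b^(δ)(x) = b(x)/(1 + δ^θ φ(|x|)). Then for all x, y with x ∉ B_R or y ∉ B_R, ⟨x - y, b^(δ)(x) - b^(δ)(y)⟩ ≤ -((L₃/2) ∧ L₅)|x - y|². -/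
/-!
With `s = δ ^ θ`, `A = 1 + s φ(|x|)` and `B = 1 + s φ(|y|)`,
`b^(δ)(x) - b^(δ)(y) = (A B)⁻¹ ((b x - b y) + s (φ(|y|) b x - φ(|x|) b y))`,
so the two hypotheses bound `A B ⟨x - y, b^(δ)(x) - b^(δ)(y)⟩` by
`(-(L₃ - s L₄)(1 + φ(|x|) + φ(|y|)) - s L₅ φ(|x|) φ(|y|)) |x - y|²`.
The choice of `δ₀` gives `s ≤ 1` and `s L₄ ≤ L₃ / 2`, and then comparing
`A B = 1 + s (φ(|x|) + φ(|y|)) + s² φ(|x|) φ(|y|)` term by term shows that this is at most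
`-((L₃ / 2) ∧ L₅) A B |x - y|²`.
-/

open Real

theorem inv_smul_sub_inv_smul_eq {𝕜 E : Type*} [Field 𝕜] [AddCommGroup E] [Module 𝕜 E]
    {s a c : 𝕜} (ha : 1 + s * a ≠ 0) (hc : 1 + s * c ≠ 0) (u v : E) :
    (1 + s * a)⁻¹ • u - (1 + s * c)⁻¹ • v =
      ((1 + s * a) * (1 + s * c))⁻¹ • (u - v + s • (c • u - a • v)) := by
  match_scalars <;> field_simp; ring

theorem mul_one_add_mul_one_add_le {s a c m L₃ L₅ : ℝ} (hs₀ : 0 ≤ s) (hs₁ : s ≤ 1)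
    (ha : 0 ≤ a) (hc : 0 ≤ c) (hm₀ : 0 ≤ m) (hm₃ : m ≤ L₃ / 2) (hm₅ : m ≤ L₅) :
    m * ((1 + s * a) * (1 + s * c)) ≤ L₃ / 2 * (1 + a + c) + s * L₅ * (a * c) := by
  have hlin : m * (1 + s * (a + c)) ≤ L₃ / 2 * (1 + a + c) := by
    nlinarith [mul_nonneg (sub_nonneg.2 hm₃) (add_nonneg ha hc),
      mul_nonneg (mul_nonneg hm₀ (sub_nonneg.2 hs₁)) (add_nonneg ha hc)]
  have hquad : m * (s * s * (a * c)) ≤ s * L₅ * (a * c) := by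
    have hms : m * s ≤ L₅ := by nlinarith
    nlinarith [mul_nonneg (mul_nonneg hs₀ (sub_nonneg.2 hms)) (mul_nonneg ha hc)]
  linarith

theorem rpow_le_of_le_rpow_one_div {δ c θ : ℝ} (hδ : 0 ≤ δ) (hc : 0 ≤ c) (hθ : 0 < θ)
    (h : δ ≤ c ^ (1 / θ)) : δ ^ θ ≤ c :=
  (le_rpow_inv_iff_of_pos hδ hc hθ).1 (by rwa [one_div] at h)

theorem inner_sub_tamed_le {E : Type*} [NormedAddCommGroup E] [InnerProductSpace ℝ E]
    {z u v : E} {s a c L₃ L₄ L₅ : ℝ}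
    (hs₀ : 0 ≤ s) (hs₁ : s ≤ 1) (hsL : s * L₄ ≤ L₃ / 2) (ha : 0 ≤ a) (hc : 0 ≤ c)
    (hm₀ : 0 ≤ min (L₃ / 2) L₅)
    (h₁ : inner ℝ z (u - v) ≤ -L₃ * (1 + a + c) * ‖z‖ ^ 2)
    (h₂ : inner ℝ z (c • u - a • v) ≤ (L₄ * (1 + a + c) - L₅ * (a * c)) * ‖z‖ ^ 2) :
    inner ℝ z ((1 + s * a)⁻¹ • u - (1 + s * c)⁻¹ • v) ≤ -min (L₃ / 2) L₅ * ‖z‖ ^ 2 := by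
  have hA : 0 < 1 + s * a := by positivity
  have hC : 0 < 1 + s * c := by positivity
  have hAC : 0 < (1 + s * a) * (1 + s * c) := mul_pos hA hC
  have hfactor := mul_one_add_mul_one_add_le hs₀ hs₁ ha hc hm₀
    (min_le_left (L₃ / 2) L₅) (min_le_right (L₃ / 2) L₅)
  have hL₄ : s * L₄ * (1 + a + c) ≤ L₃ / 2 * (1 + a + c) :=
    mul_le_mul_of_nonneg_right hsL (by positivity)
  have hz : 0 ≤ ‖z‖ ^ 2 := by positivity
  rw [inv_smul_sub_inv_smul_eq hA.ne' hC.ne', real_inner_smul_right, inner_add_right,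
    real_inner_smul_right, inv_mul_le_iff₀ hAC]
  linarith [mul_le_mul_of_nonneg_left h₂ hs₀, mul_le_mul_of_nonneg_right hfactor hz,
    mul_le_mul_of_nonneg_right hL₄ hz]

theorem stmt_8_general (d : ℕ)
    (b : EuclideanSpace ℝ (Fin d) → EuclideanSpace ℝ (Fin d))
    (φ : ℝ → ℝ)
    (hφnonneg : ∀ r, 0 ≤ r → 0 ≤ φ r)
    (L₃ L₄ L₅ : ℝ) (hL₃ : 0 < L₃) (hL₄ : 0 < L₄) (hL₅ : 0 < L₅)
    (R : ℝ)
    (h1 : ∀ x y : EuclideanSpace ℝ (Fin d),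
      (x ∉ Metric.closedBall (0 : EuclideanSpace ℝ (Fin d)) R ∨
        y ∉ Metric.closedBall (0 : EuclideanSpace ℝ (Fin d)) R) →
      (inner ℝ (x - y) (b x - b y) : ℝ) ≤
        -L₃ * (1 + φ ‖x‖ + φ ‖y‖) * ‖x - y‖^2)
    (h2 : ∀ x y : EuclideanSpace ℝ (Fin d),
      (x ∉ Metric.closedBall (0 : EuclideanSpace ℝ (Fin d)) R ∨
        y ∉ Metric.closedBall (0 : EuclideanSpace ℝ (Fin d)) R) →
      (inner ℝ (x - y) (φ ‖y‖ • b x - φ ‖x‖ • b y) : ℝ) ≤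
        (L₄ * (1 + φ ‖x‖ + φ ‖y‖) - L₅ * (φ ‖x‖ * φ ‖y‖)) * ‖x - y‖^2)
    (θ : ℝ) (hθ : θ ∈ Set.Ioo (0:ℝ) (1/2))
    (δ : ℝ) (hδ : δ ∈ Set.Ioc (0:ℝ) (min ((L₃ / (2 * L₄)) ^ (1/θ)) 1))
    (bδ : EuclideanSpace ℝ (Fin d) → EuclideanSpace ℝ (Fin d))
    (hbδ : ∀ x, bδ x = (1 + δ ^ θ * φ ‖x‖)⁻¹ • b x) :
    ∀ x y : EuclideanSpace ℝ (Fin d),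
      (x ∉ Metric.closedBall (0 : EuclideanSpace ℝ (Fin d)) R ∨
        y ∉ Metric.closedBall (0 : EuclideanSpace ℝ (Fin d)) R) →
      (inner ℝ (x - y) (bδ x - bδ y) : ℝ) ≤
        -(min (L₃ / 2) L₅) * ‖x - y‖^2 := by
  intro x y hxy
  obtain ⟨hδ₀, hδc, hδ₁⟩ : 0 < δ ∧ δ ≤ (L₃ / (2 * L₄)) ^ (1 / θ) ∧ δ ≤ 1 :=
    ⟨hδ.1, le_min_iff.1 hδ.2⟩
  have hs₁ : δ ^ θ ≤ 1 := rpow_le_one hδ₀.le hδ₁ hθ.1.le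
  have hsL : δ ^ θ * L₄ ≤ L₃ / 2 := by
    calc δ ^ θ * L₄ ≤ L₃ / (2 * L₄) * L₄ := by
          gcongr; exact rpow_le_of_le_rpow_one_div hδ₀.le (by positivity) hθ.1 hδc
      _ = L₃ / 2 := by field_simp
  rw [hbδ, hbδ]
  exact inner_sub_tamed_le (rpow_nonneg hδ₀.le θ) hs₁ hsL (hφnonneg _ (norm_nonneg x))
    (hφnonneg _ (norm_nonneg y)) (le_min (by positivity) hL₅.le) (h1 x y hxy) (h2 x y hxy)

theorem stmt_8 (d : ℕ) (hd : 1 ≤ d)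
    (b : EuclideanSpace ℝ (Fin d) → EuclideanSpace ℝ (Fin d))
    (φ : ℝ → ℝ)
    (hφnonneg : ∀ r, 0 ≤ r → 0 ≤ φ r)
    (L₃ L₄ L₅ : ℝ) (hL₃ : 0 < L₃) (hL₄ : 0 < L₄) (hL₅ : 0 < L₅)
    (R : ℝ) (hR : 0 ≤ R)
    (h1 : ∀ x y : EuclideanSpace ℝ (Fin d),
      (x ∉ Metric.closedBall (0 : EuclideanSpace ℝ (Fin d)) R ∨
        y ∉ Metric.closedBall (0 : EuclideanSpace ℝ (Fin d)) R) →
      (inner ℝ (x - y) (b x - b y) : ℝ) ≤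
        -L₃ * (1 + φ ‖x‖ + φ ‖y‖) * ‖x - y‖^2)
    (h2 : ∀ x y : EuclideanSpace ℝ (Fin d),
      (x ∉ Metric.closedBall (0 : EuclideanSpace ℝ (Fin d)) R ∨
        y ∉ Metric.closedBall (0 : EuclideanSpace ℝ (Fin d)) R) →
      (inner ℝ (x - y) (φ ‖y‖ • b x - φ ‖x‖ • b y) : ℝ) ≤
        (L₄ * (1 + φ ‖x‖ + φ ‖y‖) - L₅ * (φ ‖x‖ * φ ‖y‖)) * ‖x - y‖^2)
    (θ : ℝ) (hθ : θ ∈ Set.Ioo (0:ℝ) (1/2))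
    (δ : ℝ) (hδ : δ ∈ Set.Ioc (0:ℝ) (min ((L₃ / (2 * L₄)) ^ (1/θ)) 1))
    (bδ : EuclideanSpace ℝ (Fin d) → EuclideanSpace ℝ (Fin d))
    (hbδ : ∀ x, bδ x = (1 + δ ^ θ * φ ‖x‖)⁻¹ • b x) :
    ∀ x y : EuclideanSpace ℝ (Fin d),
      (x ∉ Metric.closedBall (0 : EuclideanSpace ℝ (Fin d)) R ∨
        y ∉ Metric.closedBall (0 : EuclideanSpace ℝ (Fin d)) R) →
      (inner ℝ (x - y) (bδ x - bδ y) : ℝ) ≤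
        -(min (L₃ / 2) L₅) * ‖x - y‖^2 :=
  stmt_8_general d b φ hφnonneg L₃ L₄ L₅ hL₃ hL₄ hL₅ R h1 h2 θ hθ δ hδ bδ hbδ
end
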